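/- arXiv:1204.0861 — 2 statements merged into one kernel-verified Lean document; each statement's English description precedes it below -/
import Mathlib

section
/- Let f : ℝⁿ → ℝ be a C² function without critical points whose gradient has constant norm on each connected component of each level set. Then every gradient line (integral curve of the gradient vector field of f) has zero curvature, i.e., is a straight line segment. -/
open Set

open InnerProductSpace

local notation "⟪" x ", " y "⟫" => @inner ℝ _ _ x y

section AuxGradient

variable {n : ℕ}

private lemma fderiv_eq_inner_gradient (f : EuclideanSpace ℝ (Fin n) → ℝ)
    (y : EuclideanSpace ℝ (Fin n)) (u : EuclideanSpace ℝ (Fin n)) :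
    fderiv ℝ f y u = ⟪gradient f y, u⟫ := by
  rw [gradient, toDual_symm_apply]

private lemma contDiff_one_gradient (f : EuclideanSpace ℝ (Fin n) → ℝ)
    (hf : ContDiff ℝ 2 f) : ContDiff ℝ 1 (gradient f) := by
  have h1 : ContDiff ℝ 1 (fderiv ℝ f) := hf.fderiv_right (by norm_num)
  have := ((InnerProductSpace.toDual ℝ (EuclideanSpace ℝ (Fin n))).symm.contDiff (n := 1)).comp h1
  exact this

private lemma gradient_fderiv_inner (f : EuclideanSpace ℝ (Fin n) → ℝ)
    (hf : ContDiff ℝ 2 f) (x a b : EuclideanSpace ℝ (Fin n)) :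
    ⟪(fderiv ℝ (gradient f) x) a, b⟫ = (fderiv ℝ (fderiv ℝ f) x a) b := by
  have h1 : ContDiff ℝ 1 (fderiv ℝ f) := hf.fderiv_right (by norm_num)
  have hF : HasFDerivAt (fderiv ℝ f) (fderiv ℝ (fderiv ℝ f) x) x :=
    (h1.differentiable (by norm_num) x).hasFDerivAt
  set L := (InnerProductSpace.toDual ℝ (EuclideanSpace ℝ (Fin n))).symm
  have hL : HasFDerivAt (gradient f)
      ((L.toContinuousLinearEquiv.toContinuousLinearMap).comp (fderiv ℝ (fderiv ℝ f) x)) x := by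
    have := (L.toContinuousLinearEquiv.toContinuousLinearMap.hasFDerivAt
      (x := fderiv ℝ f x)).comp x hF
    exact this
  rw [hL.fderiv]
  simp only [ContinuousLinearMap.coe_comp', Function.comp_apply,
    ContinuousLinearEquiv.coe_coe, LinearIsometryEquiv.coe_toContinuousLinearEquiv]
  rw [toDual_symm_apply]

private lemma sndFDeriv_symm (f : EuclideanSpace ℝ (Fin n) → ℝ)
    (hf : ContDiff ℝ 2 f) (x a b : EuclideanSpace ℝ (Fin n)) :
    fderiv ℝ (fderiv ℝ f) x a b = fderiv ℝ (fderiv ℝ f) x b a :=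
  (hf.contDiffAt.isSymmSndFDerivAt (by norm_num)) a b

private lemma key_orth (f : EuclideanSpace ℝ (Fin n) → ℝ) (hf : ContDiff ℝ 2 f)
    (hreg : ∀ x, gradient f x ≠ 0)
    (hmetric : ∀ x y, y ∈ connectedComponentIn (f ⁻¹' {f x}) x →
      ‖gradient f y‖ = ‖gradient f x‖)
    (x w : EuclideanSpace ℝ (Fin n)) (hw : ⟪w, gradient f x⟫ = 0) :
    ⟪(fderiv ℝ (gradient f) x) w, gradient f x⟫ = 0 := by
  have hg1 : ContDiff ℝ 1 (gradient f) := contDiff_one_gradient f hf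
  set X : EuclideanSpace ℝ (Fin n) → EuclideanSpace ℝ (Fin n) :=
    fun y => w - (⟪w, gradient f y⟫ / ‖gradient f y‖ ^ 2) • gradient f y with hX
  have hden : ∀ y, ‖gradient f y‖ ^ 2 ≠ 0 := fun y => by
    simpa using hreg y
  have hXc : ContDiff ℝ 1 X := by
    refine contDiff_const.sub (ContDiff.smul (ContDiff.div ?_ ?_ hden) hg1)
    · exact (contDiff_const (c := w)).inner ℝ hg1
    · exact hg1.norm_sq ℝ
  obtain ⟨σ, hσ0, ε, hε, hσ⟩ :=
    ContDiffAt.exists_forall_mem_closedBall_exists_eq_forall_mem_Ioo_hasDerivAt₀ (hXc.contDiffAt (x := x)) 0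
  -- inner product of gradient with X vanishes
  have hinner : ∀ y, ⟪gradient f y, X y⟫ = 0 := by
    intro y
    simp only [hX, inner_sub_right, inner_smul_right, real_inner_self_eq_norm_sq]
    rw [real_inner_comm w (gradient f y), div_mul_cancel₀ _ (hden y), sub_self]
  -- f is constant along σ
  have hlevel : ∀ s ∈ Ioo (0 - ε) (0 + ε), f (σ s) = f x := by
    have hd0 : ∀ s ∈ Ioo (0 - ε) (0 + ε), HasDerivAt (fun s => f (σ s)) 0 s := by
      intro s hs
      have h1 : HasDerivAt (fun s => f (σ s)) (fderiv ℝ f (σ s) (X (σ s))) s :=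
        (hf.differentiable (by norm_num) (σ s)).hasFDerivAt.comp_hasDerivAt s (hσ s hs)
      rwa [fderiv_eq_inner_gradient, hinner] at h1
    intro s hs
    have h0mem : (0 : ℝ) ∈ Ioo (0 - ε) (0 + ε) := by constructor <;> linarith
    have := (convex_Ioo (0 - ε) (0 + ε)).is_const_of_fderivWithin_eq_zero
      (f := fun s => f (σ s)) (𝕜 := ℝ) ?_ ?_ hs h0mem
    · change f (σ s) = f (σ 0) at this
      rwa [hσ0] at this
    · intro z hz
      exact ((hd0 z hz).differentiableAt).differentiableWithinAt
    · intro z hz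
      have h := (hasDerivAt_iff_hasFDerivAt.mp (hd0 z hz)).fderiv
      rw [fderivWithin_of_isOpen isOpen_Ioo hz, h]
      ext
      simp
  -- σ stays in the connected component of the level set
  have hcc : ∀ s ∈ Ioo (0 - ε) (0 + ε), σ s ∈ connectedComponentIn (f ⁻¹' {f x}) x := by
    have hσcont : ContinuousOn σ (Ioo (0 - ε) (0 + ε)) := fun s hs =>
      (hσ s hs).continuousAt.continuousWithinAt
    have h0mem : (0 : ℝ) ∈ Ioo (0 - ε) (0 + ε) := by constructor <;> linarith
    have hpc : IsPreconnected (σ '' Ioo (0 - ε) (0 + ε)) :=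
      (isPreconnected_Ioo).image σ hσcont
    have hsub : σ '' Ioo (0 - ε) (0 + ε) ⊆ f ⁻¹' {f x} := by
      rintro _ ⟨s, hs, rfl⟩
      exact hlevel s hs
    have hxmem : x ∈ σ '' Ioo (0 - ε) (0 + ε) := ⟨0, h0mem, hσ0⟩
    intro s hs
    exact hpc.subset_connectedComponentIn hxmem hsub ⟨s, hs, rfl⟩
  -- the squared norm of the gradient is constant along σ
  have hconstnorm : ∀ s ∈ Ioo (0 - ε) (0 + ε),
      ⟪gradient f (σ s), gradient f (σ s)⟫ = ‖gradient f x‖ ^ 2 := by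
    intro s hs
    rw [real_inner_self_eq_norm_sq, hmetric x (σ s) (hcc s hs)]
  -- derivative of the squared norm along σ at 0
  have hXx : X x = w := by
    show w - (⟪w, gradient f x⟫ / ‖gradient f x‖ ^ 2) • gradient f x = w
    rw [hw]
    simp
  have hderivg : HasDerivAt (fun s => gradient f (σ s))
      ((fderiv ℝ (gradient f) x) w) 0 := by
    have h0mem : (0 : ℝ) ∈ Ioo (0 - ε) (0 + ε) := by constructor <;> linarith
    have := ((hg1.differentiable (by norm_num) (σ 0)).hasFDerivAt).comp_hasDerivAt 0 (hσ 0 h0mem)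
    rwa [hσ0, hXx] at this
  have hd : HasDerivAt (fun s => ⟪gradient f (σ s), gradient f (σ s)⟫)
      (⟪gradient f x, (fderiv ℝ (gradient f) x) w⟫
        + ⟪(fderiv ℝ (gradient f) x) w, gradient f x⟫) 0 := by
    have := hderivg.inner ℝ hderivg
    rwa [hσ0] at this
  have hd0 : HasDerivAt (fun s => ⟪gradient f (σ s), gradient f (σ s)⟫) 0 0 := by
    have heq : (fun s => ⟪gradient f (σ s), gradient f (σ s)⟫)
        =ᶠ[nhds 0] fun _ => ‖gradient f x‖ ^ 2 := by
      filter_upwards [Ioo_mem_nhds (by linarith : (0:ℝ) - ε < 0) (by linarith : (0:ℝ) < 0 + ε)]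
        with s hs using hconstnorm s hs
    exact (heq.hasDerivAt_iff.mpr (hasDerivAt_const 0 _))
  have := hd.unique hd0
  have hsym := real_inner_comm (gradient f x) ((fderiv ℝ (gradient f) x) w)
  linarith

end AuxGradient

/-- **Gradient lines of a metric function are straight (zero curvature).**
Let `f : ℝⁿ → ℝ` be a `C²` function without critical points whose gradient has constant
norm on each connected component of each level set (a *metric function*).  Let `γ` be a
gradient line, i.e. a solution of `γ' = ∇f ∘ γ`.  Then the curvature of `γ` vanishes:
at every time `t`, the component of the second derivative `γ''(t)` orthogonal to
`γ'(t) = ∇f(γ t)` is zero. -/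
theorem gradient_line_of_metric_function_has_zero_curvature
    {n : ℕ} (f : EuclideanSpace ℝ (Fin n) → ℝ) (hf : ContDiff ℝ 2 f)
    (hreg : ∀ x, gradient f x ≠ 0)
    (hmetric : ∀ x y, y ∈ connectedComponentIn (f ⁻¹' {f x}) x →
      ‖gradient f y‖ = ‖gradient f x‖)
    (γ : ℝ → EuclideanSpace ℝ (Fin n))
    (hγ : ∀ t, HasDerivAt γ (gradient f (γ t)) t)
    (t : ℝ) (v : EuclideanSpace ℝ (Fin n))
    (hv : HasDerivAt (fun s => gradient f (γ s)) v t) :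
    v - (((inner ℝ v (gradient f (γ t)) : ℝ)) / ‖gradient f (γ t)‖ ^ 2) • gradient f (γ t)
      = 0 := by
  have hg1 : ContDiff ℝ 1 (gradient f) := contDiff_one_gradient f hf
  set x := γ t with hx
  set g := gradient f x with hgdef
  have hden : ‖g‖ ^ 2 ≠ 0 := by simpa [hgdef] using hreg x
  -- identify v with the Hessian applied to the gradient
  have hv' : HasDerivAt (fun s => gradient f (γ s)) ((fderiv ℝ (gradient f) x) g) t :=
    ((hg1.differentiable (by norm_num) x).hasFDerivAt).comp_hasDerivAt t (hγ t)
  have hvv : v = (fderiv ℝ (gradient f) x) g := hv.unique hv'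
  set u := v - ((inner ℝ v g : ℝ) / ‖g‖ ^ 2) • g with hu
  -- u is orthogonal to g
  have hug : ⟪u, g⟫ = 0 := by
    rw [hu, inner_sub_left, real_inner_smul_left, real_inner_self_eq_norm_sq,
      div_mul_cancel₀ _ hden, sub_self]
  -- hence ⟪Hessian u, g⟫ = 0, and by symmetry ⟪v, u⟫ = 0
  have h1 : ⟪(fderiv ℝ (gradient f) x) u, g⟫ = 0 :=
    key_orth f hf hreg hmetric x u hug
  have h2 : ⟪v, u⟫ = 0 := by
    rw [hvv, gradient_fderiv_inner f hf, sndFDeriv_symm f hf,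
      ← gradient_fderiv_inner f hf]
    exact h1
  have h3 : ⟪u, u⟫ = 0 := by
    have hgu : ⟪g, u⟫ = 0 := by rw [real_inner_comm]; exact hug
    rw [hu, inner_sub_left, real_inner_smul_left, ← hu, h2, hgu]
    ring
  have := inner_self_eq_zero (𝕜 := ℝ).mp h3
  exact this
end

section
/- Let L be a regular (embedded, C^∞) submanifold of ℝⁿ of dimension r with 1 ≤ r ≤ n−1 which is a closed subset of ℝⁿ. If the affine normal planes (the affine subspaces through points of L orthogonal to the tangent spaces) at distinct points of L never intersect, then L is an r-dimensional affine subspace of ℝⁿ. -/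
open Set Metric RealInnerProductSpace

/-- **Non-intersecting normal planes force a plane.**
Let `L ⊆ ℝⁿ` be a regular (embedded, `C^∞`) `r`-dimensional submanifold, `1 ≤ r ≤ n - 1`,
which is a closed subset of `ℝⁿ`.  Here `T p` denotes the tangent space of `L` at `p`,
described through smooth regular local parametrizations `ψ` (so `T (ψ x)` is the range of
the derivative of `ψ`).  If the affine normal planes `p + (T p)ᗮ` at distinct points of `L`
never intersect, then `L` is an `r`-dimensional affine subspace of `ℝⁿ`. -/
theorem closed_submanifold_with_disjoint_normal_planes_is_affine
    {n r : ℕ} (hr1 : 1 ≤ r) (hrn : r ≤ n - 1)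
    (L : Set (EuclideanSpace ℝ (Fin n))) (hLne : L.Nonempty) (hLclosed : IsClosed L)
    (T : EuclideanSpace ℝ (Fin n) → Submodule ℝ (EuclideanSpace ℝ (Fin n)))
    (hdim : ∀ p ∈ L, Module.finrank ℝ (T p) = r)
    (hsub : ∀ p ∈ L, ∃ (V : Set (EuclideanSpace ℝ (Fin r)))
      (ψ : EuclideanSpace ℝ (Fin r) → EuclideanSpace ℝ (Fin n))
      (U : Set (EuclideanSpace ℝ (Fin n))) (x₀ : EuclideanSpace ℝ (Fin r)),
        IsOpen V ∧ U ∈ nhds p ∧ x₀ ∈ V ∧ ψ x₀ = p ∧ ContDiff ℝ (⊤ : ℕ∞) ψ ∧ Set.InjOn ψ V ∧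
        ψ '' V = L ∩ U ∧ ∀ x ∈ V, LinearMap.range (fderiv ℝ ψ x).toLinearMap = T (ψ x))
    (hnormal : ∀ p ∈ L, ∀ q ∈ L, p ≠ q →
      Disjoint {y | y - p ∈ (T p)ᗮ} {y | y - q ∈ (T q)ᗮ}) :
    ∃ A : AffineSubspace ℝ (EuclideanSpace ℝ (Fin n)),
      Module.finrank ℝ A.direction = r ∧ L = (A : Set (EuclideanSpace ℝ (Fin n))) := by
  classical
  obtain ⟨p₀, hp₀⟩ := id hLne
  have horth : ∀ q ∈ L, ∀ x : EuclideanSpace ℝ (Fin n),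
      dist x q = Metric.infDist x L → x - q ∈ (T q)ᗮ := by
    intro q hq x hxq
    obtain ⟨V, ψ, U, x₀, hV, hU, hx₀V, hψx₀, hψs, hψinj, hψim, hψrange⟩ := hsub q hq
    have hψmem : ∀ y ∈ V, ψ y ∈ L := fun y hy => (hψim ▸ mem_image_of_mem _ hy).1
    have hD : HasFDerivAt ψ (fderiv ℝ ψ x₀) x₀ :=
      (hψs.differentiable (by simp) x₀).hasFDerivAt
    set D := fderiv ℝ ψ x₀ with hDdef
    have hf : HasFDerivAt (fun y => x - ψ y) ((0 : _ →L[ℝ] _) - D) x₀ :=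
      (hasFDerivAt_const x x₀).sub hD
    have hg := (HasFDerivAt.inner ℝ hf hf)
    have hmin : IsLocalMin (fun y => ⟪x - ψ y, x - ψ y⟫) x₀ := by
      filter_upwards [hV.mem_nhds hx₀V] with y hy
      have h1 : Metric.infDist x L ≤ dist x (ψ y) := Metric.infDist_le_dist_of_mem (hψmem y hy)
      rw [← hxq] at h1
      have h2 : ‖x - q‖ ≤ ‖x - ψ y‖ := by simpa [dist_eq_norm] using h1
      simp only [real_inner_self_eq_norm_sq, hψx₀]
      exact pow_le_pow_left₀ (norm_nonneg _) h2 2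
    have hzero := hmin.hasFDerivAt_eq_zero hg
    rw [Submodule.mem_orthogonal]
    intro u hu
    rw [← hψx₀, ← hψrange x₀ hx₀V] at hu
    obtain ⟨v, hv⟩ := hu
    have hev := ContinuousLinearMap.ext_iff.mp hzero v
    simp only [ContinuousLinearMap.comp_apply, ContinuousLinearMap.prod_apply,
      ContinuousLinearMap.sub_apply, ContinuousLinearMap.zero_apply, zero_sub,
      fderivInnerCLM_apply, ContinuousLinearMap.zero_apply] at hev
    rw [hψx₀] at hev
    have hcomm := real_inner_comm (x - q) ((-D) v)
    have h5 : ⟪(-D) v, x - q⟫ = 0 := by linarith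
    have h3 : ⟪D v, x - q⟫ = 0 := by
      rw [ContinuousLinearMap.neg_apply, inner_neg_left] at h5; linarith
    rw [← hv]
    exact h3
  have hflat : ∀ p ∈ L, ∀ y ∈ L, y - p ∈ T p := by
    have hkey : ∀ p ∈ L, ∀ x, x - p ∈ (T p)ᗮ → Metric.infDist x L = dist x p := by
      intro p hp x hxp
      obtain ⟨q, hqL, hq⟩ := hLclosed.exists_infDist_eq_dist hLne x
      rcases eq_or_ne p q with h | h
      · rw [hq, h]
      · exact absurd (Set.disjoint_left.mp (hnormal p hp q hqL h) hxp)
          (not_not_intro (horth q hqL x hq.symm))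
    intro p hp y hy
    have hle : ∀ u ∈ (T p)ᗮ, ⟪u, y - p⟫ ≤ 0 := by
      intro u hu
      by_contra hc
      push_neg at hc
      rcases eq_or_ne y p with hyp | hyp
      · simp [hyp] at hc
      -- choose R
      have hnorm : (0:ℝ) < ‖p - y‖ ^ 2 := by
        have : p - y ≠ 0 := sub_ne_zero.mpr (Ne.symm hyp)
        exact pow_pos (norm_pos_iff.mpr this) 2
      set R : ℝ := ‖p - y‖ ^ 2 / ⟪u, y - p⟫ with hR
      have hRpos : 0 < R := div_pos hnorm hc
      set x := p + R • u with hx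
      have hxm : x - p ∈ (T p)ᗮ := by
        simp only [hx, add_sub_cancel_left]
        exact Submodule.smul_mem _ _ hu
      have hinf := hkey p hp x hxm
      have hdy : dist x p ≤ dist x y := hinf ▸ Metric.infDist_le_dist_of_mem hy
      have hsq : ‖x - p‖ ^ 2 ≤ ‖x - y‖ ^ 2 := by
        rw [dist_eq_norm, dist_eq_norm] at hdy
        exact pow_le_pow_left₀ (norm_nonneg _) hdy 2
      have hexp : ‖x - y‖ ^ 2 = ‖p - y‖ ^ 2 + 2 * (R * ⟪p - y, u⟫) + ‖R • u‖ ^ 2 := by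
        have : x - y = (p - y) + R • u := by rw [hx]; abel
        rw [this, norm_add_sq_real, real_inner_smul_right]
      have hxp2 : ‖x - p‖ ^ 2 = ‖R • u‖ ^ 2 := by rw [hx]; simp
      have hiner : ⟪p - y, u⟫ = -⟪u, y - p⟫ := by
        rw [real_inner_comm, ← inner_neg_right, neg_sub]
      rw [hexp, hxp2, hiner] at hsq
      have hfin : ‖p - y‖ ^ 2 ≥ 2 * (R * ⟪u, y - p⟫) := by linarith
      rw [hR, div_mul_cancel₀ _ (ne_of_gt hc)] at hfin
      nlinarith
    have : ∀ u ∈ (T p)ᗮ, ⟪u, y - p⟫ = 0 := by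
      intro u hu
      have h1 := hle u hu
      have h2 := hle (-u) (Submodule.neg_mem _ hu)
      rw [inner_neg_left] at h2
      linarith
    rw [← (T p).orthogonal_orthogonal]
    exact (Submodule.mem_orthogonal _ _).mpr this
  have hloc : ∀ q ∈ L, ∃ t : Set (EuclideanSpace ℝ (Fin n)),
      IsOpen t ∧ q ∈ t ∧ ∀ y ∈ t, y - q ∈ T q → y ∈ L := by
    intro q hq
    obtain ⟨V, ψ, U, x₀, hV, hU, hx₀V, hψx₀, hψs, hψinj, hψim, hψrange⟩ := hsub q hq
    have hψmem : ∀ y ∈ V, ψ y ∈ L := fun y hy => (hψim ▸ mem_image_of_mem _ hy).1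
    have hD : HasFDerivAt ψ (fderiv ℝ ψ x₀) x₀ :=
      (hψs.differentiable (by simp) x₀).hasFDerivAt
    set D := fderiv ℝ ψ x₀ with hDdef
    set π : EuclideanSpace ℝ (Fin n) →L[ℝ] (T q) := Submodule.orthogonalProjectionOnto (T q) with hπ
    have hfr : Module.finrank ℝ (T q) = Module.finrank ℝ (EuclideanSpace ℝ (Fin r)) := by
      rw [hdim q hq, finrank_euclideanSpace_fin]
    let e : (T q) ≃L[ℝ] EuclideanSpace ℝ (Fin r) :=
      (LinearEquiv.ofFinrankEq _ _ hfr).toContinuousLinearEquiv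
    set G : EuclideanSpace ℝ (Fin n) → EuclideanSpace ℝ (Fin r) :=
      fun y => e (π y) with hG
    set F : EuclideanSpace ℝ (Fin r) → EuclideanSpace ℝ (Fin r) := fun z => G (ψ z) with hF
    have hGc : Continuous G := e.continuous.comp π.continuous
    have hGl : G = ⇑((e : (T q) →L[ℝ] EuclideanSpace ℝ (Fin r)).comp π) := rfl
    have hFs : ContDiff ℝ (⊤ : ℕ∞) F := by
      rw [hF, hGl]
      exact (((e : (T q) →L[ℝ] EuclideanSpace ℝ (Fin r)).comp π).contDiff).comp hψs
    set L0 : EuclideanSpace ℝ (Fin r) →L[ℝ] EuclideanSpace ℝ (Fin r) :=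
      ((e : (T q) →L[ℝ] EuclideanSpace ℝ (Fin r)).comp π).comp D with hL0
    have hF' : HasFDerivAt F L0 x₀ :=
      (((e : (T q) →L[ℝ] EuclideanSpace ℝ (Fin r)).comp π).hasFDerivAt).comp x₀ hD
    have hsurj : Function.Surjective L0 := by
      intro w
      have hw : ((e.symm w : T q) : EuclideanSpace ℝ (Fin n)) ∈ LinearMap.range D.toLinearMap := by
        rw [hDdef, hψrange x₀ hx₀V, hψx₀]
        exact (e.symm w).2
      obtain ⟨v, hv⟩ := hw
      refine ⟨v, ?_⟩
      show e (π (D v)) = w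
      rw [show D v = ((e.symm w : T q) : EuclideanSpace ℝ (Fin n)) from hv, Submodule.orthogonalProjectionOnto_mem_subspace_eq_self, e.apply_symm_apply]
    have hinj : Function.Injective L0 :=
      (LinearMap.injective_iff_surjective (f := L0.toLinearMap)).mpr hsurj
    let E0 : EuclideanSpace ℝ (Fin r) ≃L[ℝ] EuclideanSpace ℝ (Fin r) :=
      (LinearEquiv.ofBijective (L0 : _ →ₗ[ℝ] _) ⟨hinj, hsurj⟩).toContinuousLinearEquiv
    have hE0 : (E0 : EuclideanSpace ℝ (Fin r) →L[ℝ] EuclideanSpace ℝ (Fin r)) = L0 := by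
      ext v; rfl
    have hstrict : HasStrictFDerivAt F
        (E0 : EuclideanSpace ℝ (Fin r) →L[ℝ] EuclideanSpace ℝ (Fin r)) x₀ := by
      have h1 : HasStrictFDerivAt F (fderiv ℝ F x₀) x₀ := hFs.hasStrictFDerivAt (by simp)
      rwa [hF'.fderiv, ← hE0] at h1
    have hmap := hstrict.map_nhds_eq_of_equiv
    have hFV : F '' V ∈ nhds (F x₀) := hmap ▸ Filter.image_mem_map (hV.mem_nhds hx₀V)
    refine ⟨G ⁻¹' (interior (F '' V)), isOpen_interior.preimage hGc, ?_, ?_⟩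
    · show G q ∈ interior (F '' V)
      have : F x₀ = G q := by show G (ψ x₀) = G q; rw [hψx₀]
      rw [← this]
      exact mem_interior_iff_mem_nhds.mpr hFV
    · intro y hy hyq
      obtain ⟨z, hzV, hz⟩ := interior_subset (hy : G y ∈ interior (F '' V))
      have hπeq : π (ψ z) = π y := e.injective hz
      have hmem : ψ z - y ∈ T q := by
        have h1 := hflat q hq (ψ z) (hψmem z hzV)
        have : ψ z - y = (ψ z - q) - (y - q) := by abel
        rw [this]
        exact Submodule.sub_mem _ h1 hyq
      have hzero : ψ z - y = 0 := by
        have h2 : π (ψ z - y) = 0 := by rw [map_sub, hπeq, sub_self]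
        have h3 := Submodule.orthogonalProjectionOnto_mem_subspace_eq_self (K := T q) ⟨ψ z - y, hmem⟩
        rw [hπ] at h2
        rw [h2] at h3
        have h4 := congrArg Subtype.val h3.symm
        simpa using h4
      have : y = ψ z := by rw [← sub_eq_zero]; rw [← neg_sub]; simp [hzero]
      rw [this]
      exact hψmem z hzV
  -- all tangent spaces coincide
  have hTle : ∀ p ∈ L, ∀ q ∈ L, T q ≤ T p := by
    intro p hp q hq v hv
    obtain ⟨t, ht, hqt, htL⟩ := hloc q hq
    obtain ⟨ε, hε, hball⟩ := Metric.isOpen_iff.mp ht q hqt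
    set s : ℝ := ε / (2 * (‖v‖ + 1)) with hs
    have hspos : 0 < s := by positivity
    have hmem : q + s • v ∈ t := by
      apply hball
      rw [Metric.mem_ball, dist_eq_norm, add_sub_cancel_left, norm_smul,
        Real.norm_eq_abs, abs_of_pos hspos]
      have hv0 := norm_nonneg v
      rw [hs, div_mul_eq_mul_div, div_lt_iff₀ (by positivity)]
      nlinarith
    have hL2 : q + s • v ∈ L := htL _ hmem (by
      rw [add_sub_cancel_left]; exact Submodule.smul_mem _ s hv)
    have h1 := hflat p hp _ hL2
    have h2 := hflat p hp q hq
    have h3 : s • v ∈ T p := by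
      have heq : (q + s • v) - p - (q - p) = s • v := by abel
      rw [← heq]
      exact Submodule.sub_mem _ h1 h2
    have h4 := Submodule.smul_mem _ s⁻¹ h3
    rwa [inv_smul_smul₀ (ne_of_gt hspos)] at h4
  have hTeq : ∀ q ∈ L, T q = T p₀ :=
    fun q hq => le_antisymm (hTle p₀ hp₀ q hq) (hTle q hq p₀ hp₀)
  set A : AffineSubspace ℝ (EuclideanSpace ℝ (Fin n)) := AffineSubspace.mk' p₀ (T p₀) with hA
  have hmemA : ∀ y, y ∈ A ↔ y - p₀ ∈ T p₀ := by
    intro y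
    rw [hA, AffineSubspace.mem_mk', vsub_eq_sub]
  have hLA : L ⊆ (A : Set (EuclideanSpace ℝ (Fin n))) := by
    intro y hy
    exact (hmemA y).mpr (hflat p₀ hp₀ y hy)
  -- openness data
  choose! t ht hqt htL using hloc
  set u : Set (EuclideanSpace ℝ (Fin n)) := ⋃ q ∈ L, t q with hu
  have huopen : IsOpen u := isOpen_biUnion fun q hq => ht q hq
  have hkey : ∀ y ∈ (A : Set (EuclideanSpace ℝ (Fin n))), y ∈ u → y ∈ L := by
    intro y hyA hyu
    obtain ⟨q, hqL, hyt⟩ := Set.mem_iUnion₂.mp hyu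
    apply htL q hqL y hyt
    rw [hTeq q hqL]
    have h1 : y - p₀ ∈ T p₀ := (hmemA y).mp hyA
    have h2 : q - p₀ ∈ T p₀ := (hmemA q).mp (hLA hqL)
    have heq : y - p₀ - (q - p₀) = y - q := by abel
    rw [← heq]
    exact Submodule.sub_mem _ h1 h2
  have hAL : (A : Set (EuclideanSpace ℝ (Fin n))) ⊆ L := by
    by_contra hcon
    obtain ⟨y₀, hy₀A, hy₀L⟩ := Set.not_subset.mp hcon
    have hpre : IsPreconnected (A : Set (EuclideanSpace ℝ (Fin n))) :=
      (AffineSubspace.convex A).isPreconnected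
    have hcover : (A : Set (EuclideanSpace ℝ (Fin n))) ⊆ u ∪ Lᶜ := by
      intro y hyA
      by_cases hyL : y ∈ L
      · exact Or.inl (Set.mem_biUnion hyL (hqt y hyL))
      · exact Or.inr hyL
    have hne1 : ((A : Set (EuclideanSpace ℝ (Fin n))) ∩ u).Nonempty :=
      ⟨p₀, hLA hp₀, Set.mem_biUnion hp₀ (hqt p₀ hp₀)⟩
    have hne2 : ((A : Set (EuclideanSpace ℝ (Fin n))) ∩ Lᶜ).Nonempty := ⟨y₀, hy₀A, hy₀L⟩
    obtain ⟨z, hzA, hzu, hzc⟩ := hpre u Lᶜ huopen hLclosed.isOpen_compl hcover hne1 hne2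
    exact hzc (hkey z hzA hzu)
  refine ⟨A, ?_, Set.Subset.antisymm hLA hAL⟩
  rw [hA, AffineSubspace.direction_mk']
  exact hdim p₀ hp₀
end
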